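/- For a pure quantum state ρ₂ = |ψ⟩⟨ψ| and any quantum state σ₂ with ⟨ψ|σ₂|ψ⟩ > 0, the sandwiched Rényi divergence of order α equals the Petz Rényi divergence of order 2 − 1/α: D*_α(ρ₂‖σ₂) = D_{2−1/α}(ρ₂‖σ₂) for all α ∈ (1/2, 1). -/

import Mathlib

open scoped Matrix ComplexOrder

noncomputable section
open Classical

namespace QD

variable {n : Type*} [Fintype n] [DecidableEq n]

/-- Apply a real function to a Hermitian matrix via its spectral decomposition;
junk value `0` on non-Hermitian input. -/
def mfun (f : ℝ → ℝ) (A : Matrix n n ℂ) : Matrix n n ℂ :=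
  if hA : A.IsHermitian then
    (hA.eigenvectorUnitary : Matrix n n ℂ) *
      Matrix.diagonal (fun i => (f (hA.eigenvalues i) : ℂ)) *
      (star (hA.eigenvectorUnitary : Matrix n n ℂ))
  else 0

/-- Matrix logarithm (base 2) taken on the support. -/
def mlog (A : Matrix n n ℂ) : Matrix n n ℂ := mfun (fun x => Real.logb 2 x) A

/-- Real power of a positive semidefinite matrix, taken on the support. -/
def mpow (A : Matrix n n ℂ) (c : ℝ) : Matrix n n ℂ :=
  mfun (fun x => if x = 0 then 0 else x ^ c) A

/-- Trace (Schatten-1) norm. -/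
def traceNorm (A : Matrix n n ℂ) : ℝ := ((mfun Real.sqrt (Aᴴ * A)).trace).re

/-- Fidelity `F(ρ,σ) = ‖√ρ√σ‖₁`. -/
def fid (ρ σ : Matrix n n ℂ) : ℝ := traceNorm (mfun Real.sqrt ρ * mfun Real.sqrt σ)

/-- Purified distance. -/
def purD (ρ σ : Matrix n n ℂ) : ℝ := Real.sqrt (1 - (fid ρ σ) ^ 2)

/-- Trace distance. -/
def trD (ρ σ : Matrix n n ℂ) : ℝ := traceNorm (ρ - σ) / 2

/-- `suppLE ρ σ` means `supp ρ ⊆ supp σ` (equivalently `ker σ ⊆ ker ρ` for PSD matrices). -/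
def suppLE (ρ σ : Matrix n n ℂ) : Prop := ∀ v : n → ℂ, σ.mulVec v = 0 → ρ.mulVec v = 0

/-- Umegaki relative entropy (base-2 logarithm), as a real number. -/
def relEnt (τ ρ : Matrix n n ℂ) : ℝ := ((τ * (mlog τ - mlog ρ)).trace).re

/-- Umegaki relative entropy with the value `⊤` when the support condition fails. -/
def relEntE (τ ρ : Matrix n n ℂ) : EReal :=
  if suppLE τ ρ then ((relEnt τ ρ : ℝ) : EReal) else ⊤

/-- von Neumann entropy (base-2 logarithm). -/
def vnEnt (τ : Matrix n n ℂ) : ℝ := -((τ * mlog τ).trace).re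

/-- The sandwiched Rényi quantity `Q*_α`. -/
def Qstar (α : ℝ) (ρ σ : Matrix n n ℂ) : ℝ :=
  ((mfun (fun x => if x = 0 then 0 else x ^ α)
      (mpow σ ((1 - α)/(2*α)) * ρ * mpow σ ((1 - α)/(2*α)))).trace).re

/-- The sandwiched Rényi divergence of order `α`. -/
def Dstar (α : ℝ) (ρ σ : Matrix n n ℂ) : ℝ := (α - 1)⁻¹ * Real.logb 2 (Qstar α ρ σ)

/-- The sandwiched Rényi divergence with the `+∞` conventions. -/
def DstarE (α : ℝ) (ρ σ : Matrix n n ℂ) : EReal :=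
  if (α < 1 ∧ 0 < Qstar α ρ σ) ∨ (1 < α ∧ suppLE ρ σ) ∨ α = 1 then
    ((Dstar α ρ σ : ℝ) : EReal) else ⊤

/-- The Petz Rényi divergence of order `β`. -/
def Dpetz (β : ℝ) (ρ σ : Matrix n n ℂ) : ℝ :=
  (β - 1)⁻¹ * Real.logb 2 (((mpow ρ β * mpow σ (1 - β)).trace).re)

/-- The log-Euclidean Rényi quantity `Q♭_α = Tr 2^{α log ρ + (1-α) log σ}`
(with supports handled via the Lie–Trotter limit). -/
def Qflat (α : ℝ) (ρ σ : Matrix n n ℂ) : ℝ :=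
  Filter.limUnder Filter.atTop
    (fun k : ℕ => (((mpow ρ (α / k) * mpow σ ((1 - α) / k)) ^ k).trace).re)

/-- The log-Euclidean Rényi divergence of order `α`. -/
def Dflat (α : ℝ) (ρ σ : Matrix n n ℂ) : ℝ := (α - 1)⁻¹ * Real.logb 2 (Qflat α ρ σ)

/-- The log-Euclidean Rényi divergence with the `+∞` convention. -/
def DflatE (α : ℝ) (ρ σ : Matrix n n ℂ) : EReal :=
  if 0 < Qflat α ρ σ then ((Dflat α ρ σ : ℝ) : EReal) else ⊤

/-- The pinching channel associated with (the spectral projections of) `σ`. -/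
def pinch (σ X : Matrix n n ℂ) : Matrix n n ℂ :=
  if hσ : σ.IsHermitian then
    ∑ lam ∈ Finset.univ.image hσ.eigenvalues,
      mfun (fun x => if x = lam then 1 else 0) σ * X *
        mfun (fun x => if x = lam then 1 else 0) σ
  else X

/-- The number of distinct eigenvalues `v(σ)`. -/
def numEig (σ : Matrix n n ℂ) : ℕ :=
  if hσ : σ.IsHermitian then (Finset.univ.image hσ.eigenvalues).card else 1

/-- Trace of the positive part of a Hermitian matrix. -/
def posPartTrace (A : Matrix n n ℂ) : ℝ := ((mfun (fun x => max x 0) A).trace).re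

/-- Binary entropy (base 2). -/
def binEnt (x : ℝ) : ℝ := -(x * Real.logb 2 x) - (1 - x) * Real.logb 2 (1 - x)

/-- A quantum state: positive semidefinite with unit trace. -/
def IsState (ρ : Matrix n n ℂ) : Prop := ρ.PosSemidef ∧ ρ.trace = 1

end QD


/-! A rank-one `|φ⟩⟨φ|` has spectrum in `{0, ‖φ‖²}`, so for `f 0 = 0` its functional calculus
is `f(|φ⟩⟨φ|) = (f ‖φ‖² / ‖φ‖²) • |φ⟩⟨φ|`. With `s = (1 - α)/(2α)` the sandwiched operator
`σ^s ρ σ^s = |σ^s ψ⟩⟨σ^s ψ|` is rank one, hence `Q*_α = ⟨ψ|σ^{2s}|ψ⟩^α`; and `ρ^β = ρ` for a unit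
vector, hence `Tr ρ^β σ^{1-β} = ⟨ψ|σ^{1-β}|ψ⟩`. For `β = 2 - 1/α` the exponents `2s` and `1 - β`
agree, and the prefactors `α/(α - 1)` and `1/(β - 1)` coincide. -/

namespace QD

open Matrix

lemma spectrum_subset_of_mul_self_eq_smul {𝕜 A : Type*} [Field 𝕜] [Ring A] [Algebra 𝕜 A]
    {a : A} {t : 𝕜} (h : a * a = t • a) : spectrum 𝕜 a ⊆ {0, t} := by
  intro x hx
  have hx0 : x * x - t * x ∈ spectrum 𝕜 (0 : A) := by
    simpa [h, Algebra.smul_def] using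
      spectrum.subset_polynomial_aeval a (.X * .X - .C t * .X) ⟨x, hx, rfl⟩
  have hroot : x * x - t * x = 0 := by
    by_contra hne
    exact spectrum.mem_iff.mp hx0 (by simpa using (isUnit_iff_ne_zero.mpr hne).map (algebraMap 𝕜 A))
  rcases mul_eq_zero.mp (by linear_combination hroot : x * (x - t) = 0) with h0 | ht
  · exact .inl h0
  · exact .inr (sub_eq_zero.mp ht)

lemma cfc_eq_smul_of_mul_self_eq_smul {A : Type*} [Ring A] [StarRing A] [Algebra ℝ A]
    [TopologicalSpace A] [ContinuousFunctionalCalculus ℝ A IsSelfAdjoint]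
    {a : A} (ha : IsSelfAdjoint a) {t : ℝ} (h : a * a = t • a) {f : ℝ → ℝ} (hf : f 0 = 0) :
    cfc f a = (f t / t) • a := by
  rw [← cfc_const_mul_id (f t / t) a]
  refine cfc_congr fun x hx => ?_
  rcases spectrum_subset_of_mul_self_eq_smul h hx with rfl | rfl
  · simp [hf]
  · exact (div_mul_cancel_of_imp fun ht => by rw [ht, hf]).symm

variable {n : Type*} [Fintype n]

lemma star_dotProduct_self_eq_re (φ : n → ℂ) : star φ ⬝ᵥ φ = ((star φ ⬝ᵥ φ).re : ℂ) :=
  Complex.eq_re_of_ofReal_le (r := 0) (by simp [dotProduct_star_self_nonneg φ])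

lemma trace_vecMulVec_star_mul (ψ : n → ℂ) (B : Matrix n n ℂ) :
    (vecMulVec ψ (star ψ) * B).trace = star ψ ⬝ᵥ B *ᵥ ψ := by
  rw [vecMulVec_mul, trace_vecMulVec, dotProduct_comm, dotProduct_mulVec]

lemma mul_vecMulVec_star_mul {B : Matrix n n ℂ} (hB : B.IsHermitian) (ψ : n → ℂ) :
    B * vecMulVec ψ (star ψ) * B = vecMulVec (B *ᵥ ψ) (star (B *ᵥ ψ)) := by
  rw [mul_vecMulVec, vecMulVec_mul, star_mulVec, hB.eq]

lemma star_mulVec_dotProduct_mulVec {B : Matrix n n ℂ} (hB : B.IsHermitian) (ψ : n → ℂ) :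
    star (B *ᵥ ψ) ⬝ᵥ B *ᵥ ψ = star ψ ⬝ᵥ (B * B) *ᵥ ψ := by
  rw [star_mulVec, hB.eq, ← dotProduct_mulVec, mulVec_mulVec]

variable [DecidableEq n]

lemma mfun_eq_cfc {A : Matrix n n ℂ} (hA : A.IsHermitian) (f : ℝ → ℝ) : mfun f A = cfc f A := by
  rw [mfun, dif_pos hA, hA.cfc_eq, IsHermitian.cfc, Unitary.conjStarAlgAut_apply]
  rfl

lemma mpow_isHermitian {A : Matrix n n ℂ} (hA : A.IsHermitian) (c : ℝ) :
    (mpow A c).IsHermitian := by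
  rw [mpow, mfun_eq_cfc hA]
  exact cfc_predicate _ _

lemma mpow_mul_mpow {A : Matrix n n ℂ} (hA : A.PosSemidef) (s t : ℝ) :
    mpow A s * mpow A t = mpow A (s + t) := by
  simp only [mpow, mfun_eq_cfc hA.1]
  rw [← cfc_mul _ _ _ (A.finite_real_spectrum.continuousOn _)
    (A.finite_real_spectrum.continuousOn _)]
  refine cfc_congr fun x hx => ?_
  have hx0 : 0 ≤ x := by
    obtain ⟨i, rfl⟩ := hA.1.spectrum_real_eq_range_eigenvalues ▸ hx
    exact hA.eigenvalues_nonneg i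
  rcases hx0.eq_or_lt with rfl | hx0
  · simp
  · simp [hx0.ne', Real.rpow_add hx0]

lemma re_star_dotProduct_mpow_mulVec_nonneg {A : Matrix n n ℂ} (hA : A.PosSemidef)
    (ψ : n → ℂ) (c : ℝ) : 0 ≤ (star ψ ⬝ᵥ mpow A c *ᵥ ψ).re := by
  rw [← add_halves c, ← mpow_mul_mpow hA,
    ← star_mulVec_dotProduct_mulVec (mpow_isHermitian hA.1 _)]
  exact (Complex.nonneg_iff.mp (dotProduct_star_self_nonneg _)).1

lemma mfun_vecMulVec_star_self (φ : n → ℂ) {f : ℝ → ℝ} (hf : f 0 = 0) :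
    mfun f (vecMulVec φ (star φ)) =
      (f (star φ ⬝ᵥ φ).re / (star φ ⬝ᵥ φ).re) • vecMulVec φ (star φ) := by
  have hH := (posSemidef_vecMulVec_self_star φ).1
  set q := (star φ ⬝ᵥ φ).re
  have hq : star φ ⬝ᵥ φ = q := star_dotProduct_self_eq_re φ
  rw [mfun_eq_cfc hH]
  refine cfc_eq_smul_of_mul_self_eq_smul hH ?_ hf
  rw [vecMulVec_mul_vecMulVec, hq, vecMulVec_smul, Complex.coe_smul]

lemma trace_mfun_vecMulVec_star_self (φ : n → ℂ) {f : ℝ → ℝ} (hf : f 0 = 0) :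
    (mfun f (vecMulVec φ (star φ))).trace = f (star φ ⬝ᵥ φ).re := by
  rw [mfun_vecMulVec_star_self φ hf, trace_smul, trace_vecMulVec, dotProduct_comm φ,
    star_dotProduct_self_eq_re φ, Complex.ofReal_re, Complex.real_smul, ← Complex.ofReal_mul,
    div_mul_cancel_of_imp fun h => by rw [h, hf]]

lemma mpow_vecMulVec_star_self {ψ : n → ℂ} (hψ : star ψ ⬝ᵥ ψ = 1) (β : ℝ) :
    mpow (vecMulVec ψ (star ψ)) β = vecMulVec ψ (star ψ) := by
  rw [mpow, mfun_vecMulVec_star_self ψ (by simp), hψ]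
  simp

lemma qstar_vecMulVec_star_self {σ : Matrix n n ℂ} (hσ : σ.PosSemidef) (ψ : n → ℂ)
    {α : ℝ} (hα : α ≠ 0) :
    Qstar α (vecMulVec ψ (star ψ)) σ = (star ψ ⬝ᵥ mpow σ ((1 - α) / α) *ᵥ ψ).re ^ α := by
  have hB := mpow_isHermitian hσ.1 ((1 - α) / (2 * α))
  rw [Qstar, mul_vecMulVec_star_mul hB, trace_mfun_vecMulVec_star_self _ (by simp),
    star_mulVec_dotProduct_mulVec hB, mpow_mul_mpow hσ, Complex.ofReal_re,
    show (1 - α) / (2 * α) + (1 - α) / (2 * α) = (1 - α) / α by ring]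
  split_ifs with h
  · rw [h, Real.zero_rpow hα]
  · rfl

end QD

open QD Matrix in
theorem dstar_eq_dpetz_of_pure_general
    {n : Type*} [Fintype n] [DecidableEq n] (ψ : n → ℂ) (σ₂ : Matrix n n ℂ)
    (hρ : IsState (Matrix.vecMulVec ψ (star ψ))) (hσ : IsState σ₂)
    (α : ℝ) (hα : 1/2 < α) :
    Dstar α (Matrix.vecMulVec ψ (star ψ)) σ₂ =
      Dpetz (2 - 1/α) (Matrix.vecMulVec ψ (star ψ)) σ₂ := by
  have hα0 : α ≠ 0 := by positivity
  have hψ : star ψ ⬝ᵥ ψ = 1 := by rw [dotProduct_comm, ← trace_vecMulVec]; exact hρ.2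
  have hexp : 1 - (2 - 1 / α) = (1 - α) / α := by field_simp; ring
  have hpref : (2 - 1 / α - 1)⁻¹ = α * (α - 1)⁻¹ := by
    rw [show 2 - 1 / α - 1 = (α - 1) / α by field_simp; ring, inv_div, div_eq_mul_inv]
  rw [Dstar, Dpetz, qstar_vecMulVec_star_self hσ.1 ψ hα0, mpow_vecMulVec_star_self hψ,
    trace_vecMulVec_star_mul, hexp, hpref]
  rcases (re_star_dotProduct_mpow_mulVec_nonneg hσ.1 ψ ((1 - α) / α)).eq_or_lt with hq | hq
  · simp [← hq, Real.zero_rpow hα0]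
  · rw [Real.logb_rpow_eq_mul_logb_of_pos hq]
    ring

open QD Matrix in
/-- for a pure state `ρ₂ = |ψ⟩⟨ψ|` with `⟨ψ|σ₂|ψ⟩ > 0`,
`D*_α(ρ₂‖σ₂) = D_{2-1/α}(ρ₂‖σ₂)` for all `α ∈ (1/2, 1)`. -/
theorem dstar_eq_dpetz_of_pure
    {n : Type*} [Fintype n] [DecidableEq n] (ψ : n → ℂ) (σ₂ : Matrix n n ℂ)
    (hρ : IsState (Matrix.vecMulVec ψ (star ψ))) (hσ : IsState σ₂)
    (hpos : 0 < ((star ψ) ⬝ᵥ σ₂.mulVec ψ).re)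
    (α : ℝ) (hα : 1/2 < α) (hα1 : α < 1) :
    Dstar α (Matrix.vecMulVec ψ (star ψ)) σ₂ =
      Dpetz (2 - 1/α) (Matrix.vecMulVec ψ (star ψ)) σ₂ :=
  dstar_eq_dpetz_of_pure_general ψ σ₂ hρ hσ α hα
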